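/- Let $S : \mathbb{R}\times\mathbb{R}\times\mathbb{R}^{n-1} \to \mathbb{R}$ be smooth and assume $\partial_t S(t,\rho,\theta) = \frac{1}{2}\rho^2 + R(t,\rho,\theta)$ with $|R(t,\rho,\theta)| \leq C\langle t\rangle^{-\epsilon}$ uniformly for $\rho$ in compact subsets of $\mathbb{R}\setminus\{0\}$. Then for every fixed $s \in \mathbb{R}$ and every $u$ with $\hat u \in C_0^\infty((\mathbb{R}\setminus\{0\})\times\mathbb{R}^{n-1})$: $\lim_{t\to\infty}\big\|\big(e^{-iS(t+s,D_r,\theta)} - e^{-iS(t,D_r,\theta)}e^{-is D_r^2/2}\big)u\big\|_{L^2} = 0$, where $e^{-iS(t,D_r,\theta)}$ denotes the Fourier multiplier in $r$ acting by multiplication by $e^{-iS(t,\rho,\theta)}$ on $\hat u(\rho,\theta)$. -/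

import Mathlib

open MeasureTheory Set Filter

/-- Japanese bracket `⟨t⟩ = (1+t²)^{1/2}`. -/
noncomputable def jap (t : ℝ) : ℝ := Real.sqrt (1 + t ^ 2)

lemma jap_pos (t : ℝ) : 0 < jap t := Real.sqrt_pos.2 (by positivity)

lemma jap_mono {a b : ℝ} (ha : 0 ≤ a) (hab : a ≤ b) : jap a ≤ jap b :=
  Real.sqrt_le_sqrt (by nlinarith)

lemma le_jap (t : ℝ) : t ≤ jap t := by
  have h1 : t ≤ |t| := le_abs_self t
  have h2 : |t| = Real.sqrt (t ^ 2) := (Real.sqrt_sq_eq_abs t).symm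
  have h3 : Real.sqrt (t ^ 2) ≤ Real.sqrt (1 + t ^ 2) := Real.sqrt_le_sqrt (by linarith)
  calc t ≤ |t| := h1
    _ = Real.sqrt (t ^ 2) := h2
    _ ≤ jap t := h3

lemma norm_exp_I_sub_one_le (x : ℝ) :
    ‖Complex.exp ((x : ℂ) * Complex.I) - 1‖ ≤ |x| := by
  have h : Complex.exp ((x : ℂ) * Complex.I) - 1 =
      ((Real.cos x - 1 : ℝ) : ℂ) + (Real.sin x : ℝ) * Complex.I := by
    rw [Complex.exp_mul_I, ← Complex.ofReal_cos, ← Complex.ofReal_sin]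
    push_cast; ring
  rw [h]
  have habs : ‖((Real.cos x - 1 : ℝ) : ℂ) + (Real.sin x : ℝ) * Complex.I‖ =
      Real.sqrt ((Real.cos x - 1) ^ 2 + (Real.sin x) ^ 2) := by
    rw [Complex.norm_add_mul_I]
  rw [habs]
  have h1 : (Real.cos x - 1) ^ 2 + (Real.sin x) ^ 2 ≤ x ^ 2 := by
    nlinarith [Real.sin_sq_add_cos_sq x, Real.one_sub_sq_div_two_le_cos (x := x)]
  calc Real.sqrt ((Real.cos x - 1) ^ 2 + (Real.sin x) ^ 2) ≤ Real.sqrt (x ^ 2) :=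
        Real.sqrt_le_sqrt h1
    _ = |x| := Real.sqrt_sq_eq_abs x

lemma norm_exp_sub_exp_le (a b : ℝ) :
    ‖Complex.exp (-Complex.I * (a : ℂ)) - Complex.exp (-Complex.I * (b : ℂ))‖ ≤ |a - b| := by
  have key : (-Complex.I * (a : ℂ)) = (-Complex.I * (b : ℂ)) + ((b - a : ℝ) : ℂ) * Complex.I := by
    push_cast; ring
  have h : Complex.exp (-Complex.I * (a : ℂ)) - Complex.exp (-Complex.I * (b : ℂ)) =
      Complex.exp (-Complex.I * (b : ℂ)) *
        (Complex.exp (((b - a : ℝ) : ℂ) * Complex.I) - 1) := by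
    rw [mul_sub, mul_one, ← Complex.exp_add, ← key]
  rw [h, norm_mul]
  have h1 : ‖Complex.exp (-Complex.I * (b : ℂ))‖ = 1 := by
    rw [Complex.norm_exp]
    simp
  rw [h1, one_mul]
  calc ‖Complex.exp (((b - a : ℝ) : ℂ) * Complex.I) - 1‖ ≤ |b - a| :=
        norm_exp_I_sub_one_le _
    _ = |a - b| := abs_sub_comm _ _

lemma norm_exp_neg_I (a : ℝ) : ‖Complex.exp (-Complex.I * (a : ℂ))‖ = 1 := by
  rw [Complex.norm_exp]; simp

/-- Intertwining lemma: if `∂_t S(t,ρ,θ) = ½ρ² + R(t,ρ,θ)` with `|R| ≲ ⟨t⟩^{-ε}` uniformly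
for `ρ` in compact subsets of `ℝ∖{0}`, then for each `s` the multipliers satisfy
`‖(e^{-iS(t+s,·)} - e^{-iS(t,·)} e^{-isρ²/2}) û‖_{L²} → 0` as `t → ∞`, for `û` smooth with
compact support avoiding `ρ = 0`. -/
theorem stmt_13 {E : Type*} [MeasurableSpace E] (μ : Measure E) [IsFiniteMeasure μ]
    (S R : ℝ → ℝ → E → ℝ) (ε : ℝ) (hε : 0 < ε)
    (hHJ : ∀ t ρ θ, HasDerivAt (fun t' => S t' ρ θ) (ρ ^ 2 / 2 + R t ρ θ) t)
    (hR : ∀ K : Set ℝ, IsCompact K → (0 : ℝ) ∉ K →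
      ∃ C > (0 : ℝ), ∀ t ρ θ, ρ ∈ K → |R t ρ θ| ≤ C * jap t ^ (-ε))
    (hSmeas : ∀ t, Measurable (fun p : ℝ × E => S t p.1 p.2))
    (uhat : ℝ → E → ℂ) (K : Set ℝ) (hK : IsCompact K) (hK0 : (0 : ℝ) ∉ K)
    (hsupp : ∀ ρ θ, ρ ∉ K → uhat ρ θ = 0)
    (huhat : Measurable (fun p : ℝ × E => uhat p.1 p.2))
    (M : ℝ) (hM : ∀ ρ θ, ‖uhat ρ θ‖ ≤ M) :
    ∀ s : ℝ,
      Tendsto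
        (fun t => (∫ p : ℝ × E,
          ‖(Complex.exp (-Complex.I * ((S (t + s) p.1 p.2 : ℝ) : ℂ)) -
              Complex.exp (-Complex.I * ((S t p.1 p.2 : ℝ) : ℂ)) *
                Complex.exp (-Complex.I * ((s * p.1 ^ 2 / 2 : ℝ) : ℂ))) *
            uhat p.1 p.2‖ ^ 2 ∂(volume.prod μ)) ^ (1 / 2 : ℝ))
        atTop (nhds 0) := by
  intro s
  set M' : ℝ := max M 0 with hM'def
  have hM' : ∀ ρ θ, ‖uhat ρ θ‖ ≤ M' := fun ρ θ => (hM ρ θ).trans (le_max_left _ _)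
  have hM'0 : 0 ≤ M' := le_max_right _ _
  obtain ⟨C, hC, hRbd⟩ := hR K hK hK0
  have hGnn : ∀ t : ℝ, 0 ≤ |s| * (C * jap (t - |s|) ^ (-ε)) := fun t =>
    mul_nonneg (abs_nonneg s) (mul_nonneg hC.le (Real.rpow_nonneg (jap_pos _).le _))
  -- the integrand
  set F : ℝ → ℝ × E → ℝ := fun t p =>
    ‖(Complex.exp (-Complex.I * ((S (t + s) p.1 p.2 : ℝ) : ℂ)) -
        Complex.exp (-Complex.I * ((S t p.1 p.2 : ℝ) : ℂ)) *
          Complex.exp (-Complex.I * ((s * p.1 ^ 2 / 2 : ℝ) : ℂ))) *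
      uhat p.1 p.2‖ ^ 2 with hFdef
  -- key: phase difference estimate
  have key : ∀ t ρ θ, ρ ∈ K → |s| ≤ t →
      |S (t + s) ρ θ - S t ρ θ - s * ρ ^ 2 / 2| ≤ |s| * (C * jap (t - |s|) ^ (-ε)) := by
    intro t ρ θ hρ ht
    rcases lt_trichotomy s 0 with hs | hs | hs
    · -- s < 0 : interval [t+s, t]
      have hab : t + s < t := by linarith
      obtain ⟨c, hc, hceq⟩ := exists_hasDerivAt_eq_slope (fun t' => S t' ρ θ)
        (fun x => ρ ^ 2 / 2 + R x ρ θ) hab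
        (fun x _ => (hHJ x ρ θ).continuousAt.continuousWithinAt)
        (fun x _ => hHJ x ρ θ)
      have hsne : t - (t + s) ≠ 0 := by intro h; apply absurd h; intro h'; linarith
      rw [eq_div_iff hsne] at hceq
      have hd : S (t + s) ρ θ - S t ρ θ - s * ρ ^ 2 / 2 = s * R c ρ θ := by
        linear_combination hceq
      rw [hd, abs_mul]
      have hcge : t - |s| ≤ c := by
        have h1 := hc.1
        rw [abs_of_neg hs]; linarith
      have hcnn : 0 ≤ t - |s| := by linarith
      have hjap : jap (t - |s|) ≤ jap c := jap_mono hcnn hcge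
      have hrpow : jap c ^ (-ε) ≤ jap (t - |s|) ^ (-ε) :=
        Real.rpow_le_rpow_of_nonpos (jap_pos _) hjap (by linarith)
      have hRc := hRbd c ρ θ hρ
      calc |s| * |R c ρ θ| ≤ |s| * (C * jap c ^ (-ε)) :=
            mul_le_mul_of_nonneg_left hRc (abs_nonneg s)
        _ ≤ |s| * (C * jap (t - |s|) ^ (-ε)) :=
            mul_le_mul_of_nonneg_left
              (mul_le_mul_of_nonneg_left hrpow hC.le) (abs_nonneg s)
    · -- s = 0
      subst hs
      have h0 : S (t + 0) ρ θ - S t ρ θ - 0 * ρ ^ 2 / 2 = 0 := by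
        rw [add_zero]; ring
      rw [h0]; simp [hGnn]
    · -- s > 0 : interval [t, t+s]
      have hab : t < t + s := by linarith
      obtain ⟨c, hc, hceq⟩ := exists_hasDerivAt_eq_slope (fun t' => S t' ρ θ)
        (fun x => ρ ^ 2 / 2 + R x ρ θ) hab
        (fun x _ => (hHJ x ρ θ).continuousAt.continuousWithinAt)
        (fun x _ => hHJ x ρ θ)
      have hsne : t + s - t ≠ 0 := by intro h; apply absurd h; intro h'; linarith
      rw [eq_div_iff hsne] at hceq
      have hd : S (t + s) ρ θ - S t ρ θ - s * ρ ^ 2 / 2 = s * R c ρ θ := by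
        linear_combination -hceq
      rw [hd, abs_mul]
      have hcge : t - |s| ≤ c := by
        have h1 : t < c := hc.1
        have hs' : 0 ≤ |s| := abs_nonneg s
        linarith
      have hcnn : 0 ≤ t - |s| := by linarith
      have hjap : jap (t - |s|) ≤ jap c := jap_mono hcnn hcge
      have hrpow : jap c ^ (-ε) ≤ jap (t - |s|) ^ (-ε) :=
        Real.rpow_le_rpow_of_nonpos (jap_pos _) hjap (by linarith)
      have hRc := hRbd c ρ θ hρ
      calc |s| * |R c ρ θ| ≤ |s| * (C * jap c ^ (-ε)) :=
            mul_le_mul_of_nonneg_left hRc (abs_nonneg s)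
        _ ≤ |s| * (C * jap (t - |s|) ^ (-ε)) :=
            mul_le_mul_of_nonneg_left
              (mul_le_mul_of_nonneg_left hrpow hC.le) (abs_nonneg s)
  -- the phase bound tends to zero
  have hbd0 : Tendsto (fun t => |s| * (C * jap (t - |s|) ^ (-ε))) atTop (nhds 0) := by
    have h2 : Tendsto (fun t : ℝ => t - |s|) atTop atTop :=
      tendsto_atTop_add_const_right _ _ tendsto_id
    have h1 : Tendsto (fun t : ℝ => jap (t - |s|)) atTop atTop :=
      tendsto_atTop_mono (fun t => le_jap (t - |s|)) h2
    have h4 : Tendsto (fun t : ℝ => jap (t - |s|) ^ (-ε)) atTop (nhds 0) :=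
      (tendsto_rpow_neg_atTop hε).comp h1
    have h5 := (h4.const_mul C).const_mul |s|
    simpa using h5
  -- pointwise convergence of the integrand
  have hpt : ∀ p : ℝ × E, Tendsto (fun t => F t p) atTop (nhds 0) := by
    intro ⟨ρ, θ⟩
    by_cases hρ : ρ ∈ K
    · apply squeeze_zero' (g := fun t => (|s| * (C * jap (t - |s|) ^ (-ε)) * M') ^ 2)
      · exact Eventually.of_forall fun t => by rw [hFdef]; positivity
      · filter_upwards [eventually_ge_atTop |s|] with t ht
        have hcomb : Complex.exp (-Complex.I * ((S t ρ θ : ℝ) : ℂ)) *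
            Complex.exp (-Complex.I * ((s * ρ ^ 2 / 2 : ℝ) : ℂ)) =
            Complex.exp (-Complex.I * ((S t ρ θ + s * ρ ^ 2 / 2 : ℝ) : ℂ)) := by
          rw [← Complex.exp_add]
          congr 1
          push_cast; ring
        have hdiff : ‖Complex.exp (-Complex.I * ((S (t + s) ρ θ : ℝ) : ℂ)) -
            Complex.exp (-Complex.I * ((S t ρ θ : ℝ) : ℂ)) *
              Complex.exp (-Complex.I * ((s * ρ ^ 2 / 2 : ℝ) : ℂ))‖ ≤
            |s| * (C * jap (t - |s|) ^ (-ε)) := by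
          rw [hcomb]
          refine (norm_exp_sub_exp_le _ _).trans ?_
          have heq : |S (t + s) ρ θ - (S t ρ θ + s * ρ ^ 2 / 2)| =
              |S (t + s) ρ θ - S t ρ θ - s * ρ ^ 2 / 2| := by ring_nf
          rw [heq]
          exact key t ρ θ hρ ht
        rw [hFdef]
        simp only [norm_mul]
        have hmm := mul_le_mul hdiff (hM' ρ θ) (norm_nonneg _)
          (hGnn t)
        exact pow_le_pow_left₀ (mul_nonneg (norm_nonneg _) (norm_nonneg _)) hmm 2
      · have h6 := (hbd0.mul_const M').pow 2
        simpa using h6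
    · have hz : uhat ρ θ = 0 := hsupp ρ θ hρ
      have hFz : ∀ t, F t (ρ, θ) = 0 := by intro t; rw [hFdef]; simp [hz]
      simp only [hFz]
      exact tendsto_const_nhds
  -- measurability
  have hmeas : ∀ t, AEStronglyMeasurable (F t) (volume.prod μ) := by
    intro t
    apply Measurable.aestronglyMeasurable
    apply Measurable.pow_const
    apply Measurable.norm
    apply Measurable.mul _ huhat
    apply Measurable.sub
    · exact Complex.measurable_exp.comp
        (measurable_const.mul (Complex.measurable_ofReal.comp (hSmeas (t + s))))
    · apply Measurable.mul
      · exact Complex.measurable_exp.comp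
          (measurable_const.mul (Complex.measurable_ofReal.comp (hSmeas t)))
      · exact Complex.measurable_exp.comp
          (measurable_const.mul (Complex.measurable_ofReal.comp
            (((measurable_fst.pow_const 2).const_mul s).div_const 2)))
  set bound : ℝ × E → ℝ := (K ×ˢ (univ : Set E)).indicator (fun _ => (2 * M') ^ 2)
    with hbddef
  have hKmeas : MeasurableSet K := hK.isClosed.measurableSet
  have hbound_int : Integrable bound (volume.prod μ) := by
    rw [hbddef, integrable_indicator_iff (hKmeas.prod MeasurableSet.univ)]
    apply (integrableOn_const_iff enorm_ne_top).2
    right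
    rw [Measure.prod_prod]
    exact ENNReal.mul_lt_top hK.measure_lt_top (measure_lt_top μ univ)
  have hFle : ∀ t, ∀ᵐ p ∂(volume.prod μ), ‖F t p‖ ≤ bound p := by
    intro t
    apply Eventually.of_forall
    intro ⟨ρ, θ⟩
    by_cases hρ : ρ ∈ K
    · have hb : bound (ρ, θ) = (2 * M') ^ 2 := by
        rw [hbddef, indicator_of_mem (by exact ⟨hρ, mem_univ θ⟩)]
      rw [hb, Real.norm_eq_abs, abs_of_nonneg (by rw [hFdef]; positivity)]
      rw [hFdef]
      simp only [norm_mul]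
      have hd : ‖Complex.exp (-Complex.I * ((S (t + s) ρ θ : ℝ) : ℂ)) -
          Complex.exp (-Complex.I * ((S t ρ θ : ℝ) : ℂ)) *
            Complex.exp (-Complex.I * ((s * ρ ^ 2 / 2 : ℝ) : ℂ))‖ ≤ 2 := by
        refine (norm_sub_le _ _).trans ?_
        rw [norm_mul, norm_exp_neg_I, norm_exp_neg_I, norm_exp_neg_I]; norm_num
      have hmm := mul_le_mul hd (hM' ρ θ) (norm_nonneg _) (by norm_num)
      exact pow_le_pow_left₀ (mul_nonneg (norm_nonneg _) (norm_nonneg _)) hmm 2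
    · have hz : uhat ρ θ = 0 := hsupp ρ θ hρ
      have hb : bound (ρ, θ) = 0 := by
        rw [hbddef, indicator_of_notMem (by simp [hρ])]
      rw [hb, hFdef]
      simp [hz]
  have hint : Tendsto (fun t => ∫ p, F t p ∂(volume.prod μ)) atTop (nhds 0) := by
    have h := tendsto_integral_filter_of_dominated_convergence (μ := volume.prod μ)
      (F := F) (f := fun _ => (0 : ℝ)) bound
      (Eventually.of_forall hmeas) (Eventually.of_forall hFle) hbound_int
      (Eventually.of_forall (fun p => hpt p))
    simpa using h
  have hfinal := hint.rpow_const (p := (1 / 2 : ℝ)) (Or.inr (by norm_num))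
  rw [Real.zero_rpow (by norm_num)] at hfinal
  exact hfinal
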